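/- arXiv:cs/0611129 — 3 statements merged into one kernel-verified Lean document; each statement's English description precedes it below -/
import Mathlib

section
/- Let U, V, W, K, Z be finite-valued random variables such that V is conditionally independent of (Z,K) given (U,W). Then I(U; (V,K) | (W,Z)) ≤ H(K) + I(U;V|W). -/
open scoped BigOperators

/-- The probability that a random variable `X` on the finite probability space `(Ω, μ)`
takes the value `a`. -/
noncomputable def prob {Ω α : Type} [Fintype Ω] [DecidableEq α]
    (μ : Ω → ℝ) (X : Ω → α) (a : α) : ℝ :=
  ∑ ω, if X ω = a then μ ω else 0

/-- Shannon entropy (natural logarithm) of `X`. -/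
noncomputable def entH {Ω α : Type} [Fintype Ω] [Fintype α] [DecidableEq α]
    (μ : Ω → ℝ) (X : Ω → α) : ℝ :=
  -∑ a, prob μ X a * Real.log (prob μ X a)

/-- Conditional entropy `H(X|Y) = H(X,Y) - H(Y)`. -/
noncomputable def condH {Ω α β : Type} [Fintype Ω] [Fintype α] [DecidableEq α]
    [Fintype β] [DecidableEq β] (μ : Ω → ℝ) (X : Ω → α) (Y : Ω → β) : ℝ :=
  entH μ (fun ω => (X ω, Y ω)) - entH μ Y

/-- Mutual information `I(X;Y) = H(X) + H(Y) - H(X,Y)`. -/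
noncomputable def MI {Ω α β : Type} [Fintype Ω] [Fintype α] [DecidableEq α]
    [Fintype β] [DecidableEq β] (μ : Ω → ℝ) (X : Ω → α) (Y : Ω → β) : ℝ :=
  entH μ X + entH μ Y - entH μ (fun ω => (X ω, Y ω))

/-- Conditional mutual information
`I(X;Y|Z) = H(X,Z) + H(Y,Z) - H(X,Y,Z) - H(Z)`. -/
noncomputable def condMI {Ω α β γ : Type} [Fintype Ω] [Fintype α] [DecidableEq α]
    [Fintype β] [DecidableEq β] [Fintype γ] [DecidableEq γ]
    (μ : Ω → ℝ) (X : Ω → α) (Y : Ω → β) (Z : Ω → γ) : ℝ :=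
  entH μ (fun ω => (X ω, Z ω)) + entH μ (fun ω => (Y ω, Z ω))
    - entH μ (fun ω => (X ω, Y ω, Z ω)) - entH μ Z

/-- `A` is conditionally independent of `B` given `C`:
`P(A=a, B=b | C=c) = P(A=a|C=c)·P(B=b|C=c)` whenever `P(C=c) > 0`
(stated multiplicatively). -/
def CondIndep {Ω α β γ : Type} [Fintype Ω] [DecidableEq α] [DecidableEq β] [DecidableEq γ]
    (μ : Ω → ℝ) (A : Ω → α) (B : Ω → β) (C : Ω → γ) : Prop :=
  ∀ a b c, 0 < prob μ C c →
    prob μ (fun ω => (A ω, B ω, C ω)) (a, b, c) * prob μ C c =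
      prob μ (fun ω => (A ω, C ω)) (a, c) * prob μ (fun ω => (B ω, C ω)) (b, c)

/-!
By the chain rule, `I(U; V,K | W,Z) = I(U; K | W,Z) + I(U; V | K,W,Z)`, and the first term is at
most `H(K)`. For the second, put `S = (Z,K)`: expanding `I(V; U,S | W)` by the chain rule in both
orders gives `I(V;U|W) + I(V;S|U,W) = I(V;S|W) + I(V;U|S,W)`, where `I(V;S|U,W) = 0` by the
conditional independence and `I(V;S|W) ≥ 0`, so `I(U;V|S,W) ≤ I(U;V|W)`. Nonnegativity of
conditional mutual information is Gibbs' inequality, obtained termwise from `log x ≤ x - 1`.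
-/

-- For `t = 0` this holds because then `p = 0` and `r * s / t = 0`.
lemma sub_mul_div_le_mul_log {p r s t : ℝ} (hp : 0 ≤ p) (hr : p ≤ r) (hs : p ≤ s) (ht : p ≤ t) :
    p - r * s / t ≤ p * (Real.log p + Real.log t - Real.log r - Real.log s) := by
  rcases hp.eq_or_lt with rfl | hp
  · have : 0 ≤ r * s / t := by positivity
    linarith
  have hr' : 0 < r := hp.trans_le hr
  have hs' : 0 < s := hp.trans_le hs
  have ht' : 0 < t := hp.trans_le ht
  have hlog := Real.log_le_sub_one_of_pos (show 0 < r * s / (p * t) by positivity)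
  rw [Real.log_div (by positivity) (by positivity), Real.log_mul hr'.ne' hs'.ne',
    Real.log_mul hp.ne' ht'.ne'] at hlog
  have key : p * (r * s / (p * t) - 1) = r * s / t - p := by field_simp
  nlinarith

section Prob

variable {Ω α β : Type} [Fintype Ω] [DecidableEq α] [DecidableEq β] {μ : Ω → ℝ}

lemma prob_nonneg (hμ0 : ∀ ω, 0 ≤ μ ω) (X : Ω → α) (a : α) : 0 ≤ prob μ X a :=
  Finset.sum_nonneg fun ω _ => by split_ifs <;> simp [hμ0 ω]

lemma sum_prob_eq_one [Fintype α] (hμ1 : ∑ ω, μ ω = 1) (X : Ω → α) : ∑ a, prob μ X a = 1 := by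
  unfold prob
  rw [Finset.sum_comm]
  simpa using hμ1

lemma prob_le_prob_comp (hμ0 : ∀ ω, 0 ≤ μ ω) (X : Ω → α) (g : α → β) (a : α) :
    prob μ X a ≤ prob μ (fun ω => g (X ω)) (g a) :=
  Finset.sum_le_sum fun ω _ => by
    by_cases h : X ω = a
    · simp [h]
    · simp only [h, if_false]; split_ifs <;> simp [hμ0 ω]

variable (μ)

lemma prob_comp_of_injective (X : Ω → α) {g : α → β} (hg : Function.Injective g) (a : α) :
    prob μ (fun ω => g (X ω)) (g a) = prob μ X a := by
  simp only [prob, hg.eq_iff]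

lemma prob_comp_eq_sum [Fintype α] (X : Ω → α) (g : α → β) (b : β) :
    prob μ (fun ω => g (X ω)) b = ∑ a, if g a = b then prob μ X a else 0 := by
  simp only [prob, Finset.ite_sum_zero]
  rw [Finset.sum_comm]
  refine Finset.sum_congr rfl fun ω _ => ?_
  rw [Finset.sum_eq_single (X ω)] <;> aesop

lemma sum_prob_pair_left [Fintype α] (X : Ω → α) (Z : Ω → β) (z : β) :
    ∑ x, prob μ (fun ω => (X ω, Z ω)) (x, z) = prob μ Z z := by
  simp only [prob]
  rw [Finset.sum_comm]
  simp [ite_and]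

end Prob

section Information

variable {Ω α α' β β' γ γ' : Type} [Fintype Ω] [Fintype α] [DecidableEq α] [Fintype α']
  [DecidableEq α'] [Fintype β] [DecidableEq β] [Fintype β'] [DecidableEq β'] [Fintype γ]
  [DecidableEq γ] [Fintype γ'] [DecidableEq γ'] (μ : Ω → ℝ)

lemma entH_comp_eq_sum (X : Ω → α) (g : α → β) :
    entH μ (fun ω => g (X ω)) =
      -∑ a, prob μ X a * Real.log (prob μ (fun ω => g (X ω)) (g a)) := by
  unfold entH
  simp only [prob_comp_eq_sum μ X g, Finset.sum_mul, ite_mul, zero_mul]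
  rw [Finset.sum_comm]
  simp

lemma entH_comp_of_injective (X : Ω → α) {g : α → β} (hg : Function.Injective g) :
    entH μ (fun ω => g (X ω)) = entH μ X := by
  rw [entH_comp_eq_sum]
  simp only [prob_comp_of_injective μ X hg, entH]

lemma condMI_eq_sum (X : Ω → α) (Y : Ω → β) (Z : Ω → γ) :
    condMI μ X Y Z = ∑ a : α × β × γ, prob μ (fun ω => (X ω, Y ω, Z ω)) a *
      (Real.log (prob μ (fun ω => (X ω, Y ω, Z ω)) a) + Real.log (prob μ Z a.2.2)
        - Real.log (prob μ (fun ω => (X ω, Z ω)) (a.1, a.2.2))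
        - Real.log (prob μ (fun ω => (Y ω, Z ω)) (a.2.1, a.2.2))) := by
  have hXZ := entH_comp_eq_sum μ (fun ω => (X ω, Y ω, Z ω)) (fun a => (a.1, a.2.2))
  have hYZ := entH_comp_eq_sum μ (fun ω => (X ω, Y ω, Z ω)) (fun a => (a.2.1, a.2.2))
  have hZ := entH_comp_eq_sum μ (fun ω => (X ω, Y ω, Z ω)) (fun a => a.2.2)
  simp only at hXZ hYZ hZ
  rw [condMI, hXZ, hYZ, hZ, entH]
  simp only [mul_add, mul_sub, Finset.sum_add_distrib, Finset.sum_sub_distrib]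
  ring

lemma condMI_comp_of_injective (X : Ω → α) (Y : Ω → β) (Z : Ω → γ) {f : α → α'} {g : β → β'}
    {h : γ → γ'} (hf : Function.Injective f) (hg : Function.Injective g)
    (hh : Function.Injective h) :
    condMI μ (fun ω => f (X ω)) (fun ω => g (Y ω)) (fun ω => h (Z ω)) = condMI μ X Y Z := by
  have hXZ := entH_comp_of_injective μ (fun ω => (X ω, Z ω)) (hf.prodMap hh)
  have hYZ := entH_comp_of_injective μ (fun ω => (Y ω, Z ω)) (hg.prodMap hh)
  have hXYZ := entH_comp_of_injective μ (fun ω => (X ω, Y ω, Z ω)) (hf.prodMap (hg.prodMap hh))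
  have hZ := entH_comp_of_injective μ Z hh
  simp only [Prod.map_apply] at hXZ hYZ hXYZ
  rw [condMI, condMI, hXZ, hYZ, hXYZ, hZ]

lemma condMI_comm (X : Ω → α) (Y : Ω → β) (Z : Ω → γ) : condMI μ X Y Z = condMI μ Y X Z := by
  have hswap := entH_comp_of_injective μ (fun ω => (X ω, Y ω, Z ω))
    (g := fun a => (a.2.1, a.1, a.2.2)) fun a b h => by simp_all [Prod.ext_iff]
  rw [condMI, condMI, ← hswap]
  ring

lemma condMI_pair_eq_add (X : Ω → α) (Y : Ω → β) (Y' : Ω → β') (Z : Ω → γ) :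
    condMI μ X (fun ω => (Y ω, Y' ω)) Z
      = condMI μ X Y Z + condMI μ X Y' (fun ω => (Y ω, Z ω)) := by
  have hYZ := entH_comp_of_injective μ (fun ω => (Y' ω, Y ω, Z ω))
    (g := fun a => ((a.2.1, a.1), a.2.2)) fun a b h => by simp_all [Prod.ext_iff]
  have hXYZ := entH_comp_of_injective μ (fun ω => (X ω, Y' ω, Y ω, Z ω))
    (g := fun a => (a.1, (a.2.2.1, a.2.1), a.2.2.2)) fun a b h => by simp_all [Prod.ext_iff]
  rw [condMI, condMI, condMI, hYZ, hXYZ]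
  ring

variable {μ}

lemma entH_const_unit (hμ1 : ∑ ω, μ ω = 1) : entH μ (fun _ : Ω => ()) = 0 := by
  simp [entH, prob, hμ1]

-- `r * s / t` sums to `∑ z, t * t / t = ∑ z, t`, with no case split at `t = 0`.
lemma sum_prob_mul_prob_div_prob (hμ1 : ∑ ω, μ ω = 1) (X : Ω → α) (Y : Ω → β) (Z : Ω → γ) :
    ∑ a : α × β × γ, prob μ (fun ω => (X ω, Z ω)) (a.1, a.2.2) *
      prob μ (fun ω => (Y ω, Z ω)) (a.2.1, a.2.2) / prob μ Z a.2.2 = 1 := by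
  simp only [Fintype.sum_prod_type]
  conv_lhs => enter [2, x]; rw [Finset.sum_comm]
  rw [Finset.sum_comm]
  simp_rw [← Finset.sum_div, ← Finset.sum_mul_sum, sum_prob_pair_left, mul_self_div_self]
  exact sum_prob_eq_one hμ1 Z

lemma condMI_nonneg (hμ0 : ∀ ω, 0 ≤ μ ω) (hμ1 : ∑ ω, μ ω = 1)
    (X : Ω → α) (Y : Ω → β) (Z : Ω → γ) : 0 ≤ condMI μ X Y Z := by
  let XYZ := fun ω => (X ω, Y ω, Z ω)
  have hterm := fun a : α × β × γ => sub_mul_div_le_mul_log (prob_nonneg hμ0 XYZ a)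
    (prob_le_prob_comp hμ0 XYZ (fun a => (a.1, a.2.2)) a)
    (prob_le_prob_comp hμ0 XYZ (fun a => (a.2.1, a.2.2)) a)
    (prob_le_prob_comp hμ0 XYZ (fun a => a.2.2) a)
  have hsum := Finset.sum_le_sum fun a (_ : a ∈ Finset.univ) => hterm a
  rw [Finset.sum_sub_distrib, sum_prob_eq_one hμ1, sum_prob_mul_prob_div_prob hμ1] at hsum
  rw [condMI_eq_sum]
  linarith

lemma condMI_eq_zero_of_condIndep (hμ0 : ∀ ω, 0 ≤ μ ω) {X : Ω → α} {Y : Ω → β}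
    {Z : Ω → γ} (h : CondIndep μ X Y Z) : condMI μ X Y Z = 0 := by
  rw [condMI_eq_sum]
  refine Finset.sum_eq_zero fun ⟨x, y, z⟩ _ => ?_
  let XYZ := fun ω => (X ω, Y ω, Z ω)
  rcases (prob_nonneg hμ0 XYZ (x, y, z)).eq_or_lt with hp | hp
  · exact mul_eq_zero_of_left hp.symm _
  have hr := hp.trans_le (prob_le_prob_comp hμ0 XYZ (fun a => (a.1, a.2.2)) (x, y, z))
  have hs := hp.trans_le (prob_le_prob_comp hμ0 XYZ (fun a => (a.2.1, a.2.2)) (x, y, z))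
  have ht := hp.trans_le (prob_le_prob_comp hμ0 XYZ (fun a => a.2.2) (x, y, z))
  have hlog := congrArg Real.log (h x y z ht)
  rw [Real.log_mul hp.ne' ht.ne', Real.log_mul hr.ne' hs.ne'] at hlog
  simp only at hlog ⊢
  rw [hlog]
  ring

lemma entH_pair_le_add (hμ0 : ∀ ω, 0 ≤ μ ω) (hμ1 : ∑ ω, μ ω = 1) (X : Ω → α) (Y : Ω → β) :
    entH μ (fun ω => (X ω, Y ω)) ≤ entH μ X + entH μ Y := by
  have h := condMI_nonneg hμ0 hμ1 X Y fun _ => ()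
  have hX := entH_comp_of_injective μ X (g := fun a => (a, ())) fun a b h => by simpa using h
  have hY := entH_comp_of_injective μ Y (g := fun a => (a, ())) fun a b h => by simpa using h
  have hXY := entH_comp_of_injective μ (fun ω => (X ω, Y ω)) (g := fun a => (a.1, a.2, ()))
    fun a b h => by simp_all [Prod.ext_iff]
  rw [condMI, entH_const_unit hμ1, hX, hY, hXY] at h
  linarith

lemma entH_le_entH_pair (hμ0 : ∀ ω, 0 ≤ μ ω) (hμ1 : ∑ ω, μ ω = 1) (X : Ω → α) (Z : Ω → γ) :
    entH μ Z ≤ entH μ (fun ω => (X ω, Z ω)) := by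
  have h := condMI_nonneg hμ0 hμ1 X X Z
  have hXXZ := entH_comp_of_injective μ (fun ω => (X ω, Z ω)) (g := fun a => (a.1, a.1, a.2))
    fun a b h => by simp_all [Prod.ext_iff]
  rw [condMI, hXXZ] at h
  linarith

lemma condMI_le_entH_right (hμ0 : ∀ ω, 0 ≤ μ ω) (hμ1 : ∑ ω, μ ω = 1)
    (X : Ω → α) (Y : Ω → β) (Z : Ω → γ) : condMI μ X Y Z ≤ entH μ Y := by
  have hsub := entH_pair_le_add hμ0 hμ1 Y Z
  have hmono := entH_le_entH_pair hμ0 hμ1 Y fun ω => (X ω, Z ω)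
  have hswap := entH_comp_of_injective μ (fun ω => (X ω, Y ω, Z ω))
    (g := fun a => (a.2.1, a.1, a.2.2)) fun a b h => by simp_all [Prod.ext_iff]
  rw [condMI]
  linarith

lemma condMI_cond_pair_le_of_condIndep (hμ0 : ∀ ω, 0 ≤ μ ω) (hμ1 : ∑ ω, μ ω = 1)
    (X : Ω → α) (Y : Ω → β) (S : Ω → γ') (Z : Ω → γ)
    (hci : CondIndep μ Y S fun ω => (X ω, Z ω)) :
    condMI μ X Y (fun ω => (S ω, Z ω)) ≤ condMI μ X Y Z := by
  have hSX := condMI_pair_eq_add μ Y S X Z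
  have hXS := condMI_pair_eq_add μ Y X S Z
  have hswap := condMI_comp_of_injective μ Y (fun ω => (X ω, S ω)) Z (f := id) (h := id)
    Function.injective_id Prod.swap_injective Function.injective_id
  simp only [id, Prod.swap_prod_mk] at hswap
  rw [condMI_eq_zero_of_condIndep hμ0 hci] at hXS
  rw [condMI_comm μ X, condMI_comm μ X]
  linarith [condMI_nonneg hμ0 hμ1 Y S Z]

end Information

theorem stmt1_general {Ω 𝒰 𝒱 𝒲 𝒦 𝒵 : Type} [Fintype Ω]
    [Fintype 𝒰] [DecidableEq 𝒰]
    [Fintype 𝒱] [DecidableEq 𝒱]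
    [Fintype 𝒲] [DecidableEq 𝒲]
    [Fintype 𝒦] [DecidableEq 𝒦]
    [Fintype 𝒵] [DecidableEq 𝒵]
    (μ : Ω → ℝ) (hμ0 : ∀ ω, 0 ≤ μ ω) (hμ1 : ∑ ω, μ ω = 1)
    (U : Ω → 𝒰) (V : Ω → 𝒱) (W : Ω → 𝒲) (K : Ω → 𝒦) (Z : Ω → 𝒵)
    (hci : CondIndep μ V (fun ω => (Z ω, K ω)) (fun ω => (U ω, W ω))) :
    condMI μ U (fun ω => (V ω, K ω)) (fun ω => (W ω, Z ω))
      ≤ entH μ K + condMI μ U V W := by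
  have hswap := condMI_comp_of_injective μ U (fun ω => (K ω, V ω)) (fun ω => (W ω, Z ω))
    (f := id) (h := id) Function.injective_id Prod.swap_injective Function.injective_id
  have hcond := condMI_comp_of_injective μ U V (fun ω => ((Z ω, K ω), W ω))
    (f := id) (g := id) (h := fun c => (c.1.2, c.2, c.1.1)) Function.injective_id
    Function.injective_id fun c d h => by simp_all [Prod.ext_iff]
  simp only [id, Prod.swap_prod_mk] at hswap hcond
  rw [hswap, condMI_pair_eq_add, hcond]
  exact add_le_add (condMI_le_entH_right hμ0 hμ1 U K _)
    (condMI_cond_pair_le_of_condIndep hμ0 hμ1 U V _ W hci)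

/-- If `V` is conditionally independent of `(Z,K)` given `(U,W)`, then
`I(U; (V,K) | (W,Z)) ≤ H(K) + I(U;V|W)`. -/
theorem stmt1 {Ω 𝒰 𝒱 𝒲 𝒦 𝒵 : Type} [Fintype Ω]
    [Fintype 𝒰] [DecidableEq 𝒰] [Nonempty 𝒰]
    [Fintype 𝒱] [DecidableEq 𝒱] [Nonempty 𝒱]
    [Fintype 𝒲] [DecidableEq 𝒲] [Nonempty 𝒲]
    [Fintype 𝒦] [DecidableEq 𝒦] [Nonempty 𝒦]
    [Fintype 𝒵] [DecidableEq 𝒵] [Nonempty 𝒵]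
    (μ : Ω → ℝ) (hμ0 : ∀ ω, 0 ≤ μ ω) (hμ1 : ∑ ω, μ ω = 1)
    (U : Ω → 𝒰) (V : Ω → 𝒱) (W : Ω → 𝒲) (K : Ω → 𝒦) (Z : Ω → 𝒵)
    (hci : CondIndep μ V (fun ω => (Z ω, K ω)) (fun ω => (U ω, W ω))) :
    condMI μ U (fun ω => (V ω, K ω)) (fun ω => (W ω, Z ω))
      ≤ entH μ K + condMI μ U V W :=
  stmt1_general μ hμ0 hμ1 U V W K Z hci
end

section
/- Let 𝒳, 𝒴, 𝒵 be finite types, Q1 a channel from 𝒳 to 𝒴, Q2 a channel from 𝒴 to 𝒵, and φ: 𝒳 → ℝ≥0 a cost function. For a probability mass function p on 𝒳, let I_p(X;Y) denote the mutual information of the joint law p(x)·Q1(y|x), let I_p(X;Z) denote the mutual information of the joint law ∑_y p(x)·Q1(y|x)·Q2(z|y), and let E_p φ = ∑_x p(x)·φ(x). Define Γ(r,q) = sup { I_p(X;Y) − I_p(X;Z) : p a PMF on 𝒳 with I_p(X;Y) ≥ r and E_p φ ≤ q }, on the domain Dom = {(r,q) ∈ ℝ≥0 × ℝ≥0 : the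 constraint set is nonempty}. Then: (i) Dom is convex; (ii) Γ is concave on Dom, i.e., for (r1,q1), (r2,q2) ∈ Dom and θ ∈ [0,1], Γ(θr1+(1−θ)r2, θq1+(1−θ)q2) ≥ θΓ(r1,q1) + (1−θ)Γ(r2,q2); (iii) Γ is nonincreasing in r and nondecreasing in q. -/
open scoped BigOperators

/-- Mutual information of a joint probability mass function `P` on `α × β`
(natural logarithm, with `0·log 0 = 0`). -/
noncomputable def miJoint {α β : Type} [Fintype α] [Fintype β] (P : α → β → ℝ) : ℝ :=
  ∑ x, ∑ y, P x y * Real.log (P x y / ((∑ y', P x y') * (∑ x', P x' y)))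

/-- Mutual information `I_p(X;Y)` between the input and output of the channel `Q1`,
for input distribution `p`. -/
noncomputable def IY {𝒳 𝒴 : Type} [Fintype 𝒳] [Fintype 𝒴]
    (Q1 : 𝒳 → 𝒴 → ℝ) (p : 𝒳 → ℝ) : ℝ :=
  miJoint (fun x y => p x * Q1 x y)

/-- Mutual information `I_p(X;Z)` between the input of `Q1` and the output of the
cascade `Q1 ∘ Q2`, for input distribution `p`. -/
noncomputable def IZ {𝒳 𝒴 𝒵 : Type} [Fintype 𝒳] [Fintype 𝒴] [Fintype 𝒵]
    (Q1 : 𝒳 → 𝒴 → ℝ) (Q2 : 𝒴 → 𝒵 → ℝ) (p : 𝒳 → ℝ) : ℝ :=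
  miJoint (fun x z => p x * ∑ y, Q1 x y * Q2 y z)

/-- Feasible input distributions: PMFs `p` on `𝒳` with `I_p(X;Y) ≥ r` and `E_p φ ≤ q`. -/
def Feas {𝒳 𝒴 : Type} [Fintype 𝒳] [Fintype 𝒴]
    (Q1 : 𝒳 → 𝒴 → ℝ) (φ : 𝒳 → ℝ) (r q : ℝ) : Set (𝒳 → ℝ) :=
  {p | (∀ x, 0 ≤ p x) ∧ (∑ x, p x = 1) ∧ r ≤ IY Q1 p ∧ (∑ x, p x * φ x) ≤ q}

/-- Wyner's `Γ` function with a generalized power constraint: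
`Γ(r,q) = sup { I_p(X;Y) − I_p(X;Z) : p ∈ Feas(r,q) }`. -/
noncomputable def Gam {𝒳 𝒴 𝒵 : Type} [Fintype 𝒳] [Fintype 𝒴] [Fintype 𝒵]
    (Q1 : 𝒳 → 𝒴 → ℝ) (Q2 : 𝒴 → 𝒵 → ℝ) (φ : 𝒳 → ℝ) (r q : ℝ) : ℝ :=
  sSup ((fun p => IY Q1 p - IZ Q1 Q2 p) '' Feas Q1 φ r q)

/-- The domain of `Γ`: pairs `(r,q)` of nonnegative reals with nonempty constraint set. -/
def GamDom {𝒳 𝒴 : Type} [Fintype 𝒳] [Fintype 𝒴]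
    (Q1 : 𝒳 → 𝒴 → ℝ) (φ : 𝒳 → ℝ) : Set (ℝ × ℝ) :=
  {rq | 0 ≤ rq.1 ∧ 0 ≤ rq.2 ∧ (Feas Q1 φ rq.1 rq.2).Nonempty}

/-!
By `I(X;Y) = H(Y) - H(Y|X)`, on the simplex both `I_p(X;Y)` and `I_p(X;Y) - I_p(X;Z)` are a
concave function of the output law `ν = p Q₁` minus a linear function of `p`: the concave part is
`H(ν)` for the first and `H(ν) - H(ν Q₂)` for the second. Concavity of the latter comes from the
mixture identity `H(∑ aᵢ νᵢ) - ∑ aᵢ H(νᵢ) = ∑ aᵢ D(νᵢ ‖ ν)`, applied before and after `Q₂`,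
together with data processing `D(νᵢ Q₂ ‖ ν Q₂) ≤ D(νᵢ ‖ ν)`.

Concavity of `I_p(X;Y)` and linearity of the cost make the graph of `(r, q) ↦ Feas(r, q)` convex,
and a supremum of a bounded concave function over the fibres of a convex graph is concave on the
set of nonempty fibres. Monotonicity holds because the feasible sets are nested.
-/

open Finset Matrix Real

namespace WynerGamma

section Entropy

variable {ι : Type*} [Fintype ι]

noncomputable def entropy (ν : ι → ℝ) : ℝ := ∑ i, negMulLog (ν i)

/-- Terms with `ν i = 0` vanish (`log (x / 0) = log 0 = 0`), so results assume `μ ≪ ν`. -/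
noncomputable def relEntropy (μ ν : ι → ℝ) : ℝ := ∑ i, μ i * log (μ i / ν i)

theorem concaveOn_entropy : ConcaveOn ℝ {ν : ι → ℝ | ∀ i, 0 ≤ ν i} entropy := by
  refine ⟨fun μ hμ ν hν a b ha hb _ i => ?_, fun μ hμ ν hν a b ha hb hab => ?_⟩
  · exact add_nonneg (mul_nonneg ha (hμ i)) (mul_nonneg hb (hν i))
  · simp only [entropy, smul_eq_mul, mul_sum, ← sum_add_distrib]
    exact sum_le_sum fun i _ => concaveOn_negMulLog.2 (hμ i) (hν i) ha hb hab

theorem entropy_nonneg {ν : ι → ℝ} (hν : ν ∈ stdSimplex ℝ ι) : 0 ≤ entropy ν :=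
  sum_nonneg fun i _ =>
    negMulLog_nonneg (mem_Icc_of_mem_stdSimplex hν i).1 (mem_Icc_of_mem_stdSimplex hν i).2

theorem entropy_le_card {ν : ι → ℝ} (hν : ∀ i, 0 ≤ ν i) : entropy ν ≤ Fintype.card ι :=
  calc entropy ν ≤ ∑ _i : ι, (1 : ℝ) :=
        sum_le_sum fun i _ => (negMulLog_le_one_sub_self (hν i)).trans (by linarith [hν i])
    _ = Fintype.card ι := by simp

theorem mul_log_div_eq {x y : ℝ} (hy : y ≠ 0) : x * log (x / y) = x * log x - x * log y := by
  rcases eq_or_ne x 0 with rfl | hx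
  · simp
  · rw [log_div hx hy, mul_sub]

theorem entropy_smul_add_smul {μ ν : ι → ℝ} (hμ : ∀ i, 0 ≤ μ i) (hν : ∀ i, 0 ≤ ν i) {a b : ℝ}
    (ha : 0 ≤ a) (hb : 0 ≤ b) :
    entropy (a • μ + b • ν) = a * entropy μ + b * entropy ν
      + a * relEntropy μ (a • μ + b • ν) + b * relEntropy ν (a • μ + b • ν) := by
  simp only [entropy, relEntropy, mul_sum, ← sum_add_distrib]
  refine sum_congr rfl fun i _ => ?_
  simp only [Pi.add_apply, Pi.smul_apply, smul_eq_mul, negMulLog]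
  have haμ := mul_nonneg ha (hμ i)
  have hbν := mul_nonneg hb (hν i)
  rcases eq_or_ne (a * μ i + b * ν i) 0 with h | h
  · have h₁ : a * μ i = 0 := by linarith
    have h₂ : b * ν i = 0 := by linarith
    simp only [h, div_zero, log_zero]
    linear_combination (log (μ i)) * h₁ + (log (ν i)) * h₂
  · rw [mul_log_div_eq h, mul_log_div_eq h]
    ring

/-- The log-sum inequality: Jensen for `x ↦ x log x` at the points `μ i / ν i` with weights
`ν i / ∑ ν`. -/
theorem sum_mul_log_div_sum_le_relEntropy {μ ν : ι → ℝ} (hμ : ∀ i, 0 ≤ μ i) (hν : ∀ i, 0 ≤ ν i)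
    (hac : ∀ i, ν i = 0 → μ i = 0) :
    (∑ i, μ i) * log ((∑ i, μ i) / ∑ i, ν i) ≤ relEntropy μ ν := by
  set B := ∑ i, ν i
  obtain hB | hB : B = 0 ∨ 0 < B := (sum_nonneg fun i _ => hν i).eq_or_lt'
  · have hν0 i : ν i = 0 := (sum_eq_zero_iff_of_nonneg fun i _ => hν i).1 hB i (mem_univ i)
    simp [relEntropy, hν0, hac _ (hν0 _)]
  have hw : ∑ i, ν i / B = 1 := by rw [← sum_div, div_self hB.ne']
  have hpt i : ν i / B * (μ i / ν i) = μ i / B := by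
    rcases eq_or_ne (ν i) 0 with h | h
    · simp [h, hac i h]
    · field_simp
  have hJ := convexOn_mul_log.map_sum_le (t := univ) (w := fun i => ν i / B)
    (p := fun i => μ i / ν i) (fun i _ => div_nonneg (hν i) hB.le) hw
    (fun i _ => div_nonneg (hμ i) (hν i))
  simp only [smul_eq_mul, ← mul_assoc, hpt, ← sum_div] at hJ
  calc (∑ i, μ i) * log ((∑ i, μ i) / B) = B * ((∑ i, μ i) / B * log ((∑ i, μ i) / B)) := by
        field_simp
    _ ≤ B * (∑ i, μ i / B * log (μ i / ν i)) := by gcongr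
    _ = relEntropy μ ν := by
        simp only [relEntropy, mul_sum]
        exact sum_congr rfl fun i _ => by field_simp

end Entropy

section Channel

variable {α β : Type*} [Fintype α]

theorem concaveOn_vecMul_sub_sum {h : (β → ℝ) → ℝ} (hh : ConcaveOn ℝ {ν | ∀ y, 0 ≤ ν y} h)
    {Q : Matrix α β ℝ} (hQ : ∀ x y, 0 ≤ Q x y) (c : α → ℝ) :
    ConcaveOn ℝ (stdSimplex ℝ α) (fun p => h (p ᵥ* Q) - ∑ x, p x * c x) := by
  refine (((hh.comp_linearMap (vecMulLinear Q)).subset (fun p hp y => ?_)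
    (convex_stdSimplex ℝ α)).sub
      ((Fintype.linearCombination ℝ c).convexOn (convex_stdSimplex ℝ α))).congr fun p _ => ?_
  · exact sum_nonneg fun x _ => mul_nonneg (hp.1 x) (hQ x y)
  · simp [Fintype.linearCombination_apply]

variable [Fintype β]

theorem vecMul_mem_stdSimplex {Q : Matrix α β ℝ} (hQ : ∀ x, Q x ∈ stdSimplex ℝ β) {p : α → ℝ}
    (hp : p ∈ stdSimplex ℝ α) : p ᵥ* Q ∈ stdSimplex ℝ β := by
  refine ⟨fun y => sum_nonneg fun x _ => mul_nonneg (hp.1 x) ((hQ x).1 y), ?_⟩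
  simp only [vecMul, dotProduct]
  rw [sum_comm]
  simp only [← mul_sum, (hQ _).2, mul_one, hp.2]

/-- Data processing, from the log-sum inequality applied to each output letter. -/
theorem relEntropy_vecMul_le {Q : Matrix α β ℝ} (hQ : ∀ x, Q x ∈ stdSimplex ℝ β) {μ ν : α → ℝ}
    (hμ : ∀ x, 0 ≤ μ x) (hν : ∀ x, 0 ≤ ν x) (hac : ∀ x, ν x = 0 → μ x = 0) :
    relEntropy (μ ᵥ* Q) (ν ᵥ* Q) ≤ relEntropy μ ν :=
  calc relEntropy (μ ᵥ* Q) (ν ᵥ* Q)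
      ≤ ∑ y, ∑ x, μ x * Q x y * log (μ x * Q x y / (ν x * Q x y)) := by
        refine sum_le_sum fun y _ => sum_mul_log_div_sum_le_relEntropy
          (fun x => mul_nonneg (hμ x) ((hQ x).1 y)) (fun x => mul_nonneg (hν x) ((hQ x).1 y))
          fun x h => ?_
        rcases mul_eq_zero.1 h with h | h <;> simp [h, hac]
    _ = ∑ x, (∑ y, Q x y) * (μ x * log (μ x / ν x)) := by
        rw [sum_comm]
        refine sum_congr rfl fun x _ => ?_
        rw [sum_mul]
        refine sum_congr rfl fun y _ => ?_
        rcases eq_or_ne (Q x y) 0 with h | h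
        · simp [h]
        · rw [mul_div_mul_right _ _ h]; ring
    _ = relEntropy μ ν := by simp only [(hQ _).2, one_mul, relEntropy]

theorem concaveOn_entropy_sub_entropy_vecMul {Q : Matrix α β ℝ}
    (hQ : ∀ x, Q x ∈ stdSimplex ℝ β) :
    ConcaveOn ℝ {ν : α → ℝ | ∀ x, 0 ≤ ν x} (fun ν => entropy ν - entropy (ν ᵥ* Q)) := by
  refine concaveOn_iff_forall_pos.2 ⟨concaveOn_entropy.1, fun μ hμ ν hν a b ha hb _ => ?_⟩
  have hvec {ρ : α → ℝ} (hρ : ∀ x, 0 ≤ ρ x) (y : β) : 0 ≤ (ρ ᵥ* Q) y :=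
    sum_nonneg fun x _ => mul_nonneg (hρ x) ((hQ x).1 y)
  have hμ' x := mul_nonneg ha.le (hμ x)
  have hν' x := mul_nonneg hb.le (hν x)
  have hmix x : 0 ≤ (a • μ + b • ν) x := add_nonneg (hμ' x) (hν' x)
  have hdpμ := relEntropy_vecMul_le hQ hμ hmix fun x h =>
    (mul_eq_zero.1 ((add_eq_zero_iff_of_nonneg (hμ' x) (hν' x)).1 h).1).resolve_left ha.ne'
  have hdpν := relEntropy_vecMul_le hQ hν hmix fun x h =>
    (mul_eq_zero.1 ((add_eq_zero_iff_of_nonneg (hμ' x) (hν' x)).1 h).2).resolve_left hb.ne'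
  have hmQ : (a • μ + b • ν) ᵥ* Q = a • (μ ᵥ* Q) + b • (ν ᵥ* Q) := by
    rw [add_vecMul, smul_vecMul, smul_vecMul]
  simp only [smul_eq_mul]
  rw [entropy_smul_add_smul hμ hν ha.le hb.le, hmQ,
    entropy_smul_add_smul (hvec hμ) (hvec hν) ha.le hb.le, ← hmQ]
  linarith [mul_le_mul_of_nonneg_left hdpμ ha.le, mul_le_mul_of_nonneg_left hdpν hb.le]

end Channel

section ValueFunction

variable {E U : Type*} [AddCommGroup E] [Module ℝ E] [AddCommGroup U] [Module ℝ U]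
  {F : U → Set E}

theorem convex_setOf_nonempty (hF : Convex ℝ {x : U × E | x.2 ∈ F x.1}) :
    Convex ℝ {u | (F u).Nonempty} := by
  convert hF.linear_image (LinearMap.fst ℝ U E)
  ext u
  simp [Set.Nonempty]

theorem concaveOn_sSup_image {S : Set E} {f : E → ℝ} (hF : Convex ℝ {x : U × E | x.2 ∈ F x.1})
    (hFS : ∀ u, F u ⊆ S) (hf : ConcaveOn ℝ S f) (hbdd : BddAbove (f '' S)) :
    ConcaveOn ℝ {u | (F u).Nonempty} (fun u => sSup (f '' F u)) := by
  refine ⟨convex_setOf_nonempty hF, fun u hu v hv a b ha hb hab => ?_⟩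
  have hbdd' (w : U) : BddAbove (f '' F w) := hbdd.mono (Set.image_mono (hFS w))
  rw [← Real.sSup_smul_of_nonneg ha, ← Real.sSup_smul_of_nonneg hb,
    ← csSup_add (hu.image f).smul_set ((hbdd' u).smul_of_nonneg ha) (hv.image f).smul_set
      ((hbdd' v).smul_of_nonneg hb)]
  refine csSup_le ((hu.image f).smul_set.add (hv.image f).smul_set) ?_
  rintro _ ⟨_, ⟨_, ⟨p, hp, rfl⟩, rfl⟩, _, ⟨_, ⟨q, hq, rfl⟩, rfl⟩, rfl⟩
  exact (hf.2 (hFS u hp) (hFS v hq) ha hb hab).trans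
    (le_csSup (hbdd' _) ⟨_, hF (x := (u, p)) (y := (v, q)) hp hq ha hb hab, rfl⟩)

end ValueFunction

section MutualInformation

variable {𝒳 𝒴 𝒵 : Type} [Fintype 𝒳] [Fintype 𝒴] [Fintype 𝒵]

theorem IY_eq_entropy_sub {Q : 𝒳 → 𝒴 → ℝ} (hQ : ∀ x, Q x ∈ stdSimplex ℝ 𝒴)
    {p : 𝒳 → ℝ} (hp : ∀ x, 0 ≤ p x) :
    IY Q p = entropy (p ᵥ* Q) - ∑ x, p x * entropy (Q x) := by
  have hterm (x : 𝒳) (y : 𝒴) :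
      p x * Q x y * log (p x * Q x y / ((∑ y', p x * Q x y') * ∑ x', p x' * Q x' y)) =
        p x * (Q x y * log (Q x y)) - p x * Q x y * log (∑ x', p x' * Q x' y) := by
    rw [← mul_sum, (hQ x).2, mul_one]
    rcases eq_or_ne (p x * Q x y) 0 with h | h
    · rw [← mul_assoc, h]; simp
    have hpos : 0 < ∑ x', p x' * Q x' y :=
      ((mul_nonneg (hp x) ((hQ x).1 y)).lt_of_ne' h).trans_le <|
        single_le_sum (fun x' _ => mul_nonneg (hp x') ((hQ x').1 y)) (mem_univ x)
    rw [mul_div_mul_left _ _ (left_ne_zero_of_mul h), log_div (right_ne_zero_of_mul h) hpos.ne']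
    ring
  simp only [IY, miJoint, hterm, sum_sub_distrib]
  rw [sum_comm (f := fun x y => p x * Q x y * log (∑ x', p x' * Q x' y))]
  simp only [← sum_mul, entropy, negMulLog, neg_mul, sum_neg_distrib, vecMul, dotProduct]
  simp only [mul_neg, mul_sum, sum_neg_distrib]
  ring

theorem IZ_eq_IY_mul (Q₁ : Matrix 𝒳 𝒴 ℝ) (Q₂ : Matrix 𝒴 𝒵 ℝ) (p : 𝒳 → ℝ) :
    IZ Q₁ Q₂ p = IY (Q₁ * Q₂) p :=
  rfl

theorem IY_nonneg {Q : 𝒳 → 𝒴 → ℝ} (hQ : ∀ x, Q x ∈ stdSimplex ℝ 𝒴) {p : 𝒳 → ℝ}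
    (hp : p ∈ stdSimplex ℝ 𝒳) : 0 ≤ IY Q p := by
  rw [IY_eq_entropy_sub hQ hp.1, sub_nonneg, show p ᵥ* Q = ∑ x, p x • Q x from vecMul_eq_sum p Q]
  simpa only [smul_eq_mul] using
    concaveOn_entropy.le_map_sum (fun x _ => hp.1 x) hp.2 (fun x _ => (hQ x).1)

theorem IY_le_card {Q : 𝒳 → 𝒴 → ℝ} (hQ : ∀ x, Q x ∈ stdSimplex ℝ 𝒴) {p : 𝒳 → ℝ}
    (hp : p ∈ stdSimplex ℝ 𝒳) : IY Q p ≤ Fintype.card 𝒴 := by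
  rw [IY_eq_entropy_sub hQ hp.1]
  have := sum_nonneg fun x (_ : x ∈ univ) => mul_nonneg (hp.1 x) (entropy_nonneg (hQ x))
  linarith [entropy_le_card (vecMul_mem_stdSimplex hQ hp).1]

theorem concaveOn_IY {Q : 𝒳 → 𝒴 → ℝ} (hQ : ∀ x, Q x ∈ stdSimplex ℝ 𝒴) :
    ConcaveOn ℝ (stdSimplex ℝ 𝒳) (IY Q) :=
  (concaveOn_vecMul_sub_sum concaveOn_entropy (fun x => (hQ x).1) fun x => entropy (Q x)).congr
    fun _ hp => (IY_eq_entropy_sub hQ hp.1).symm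

theorem concaveOn_IY_sub_IZ {Q₁ : Matrix 𝒳 𝒴 ℝ} {Q₂ : Matrix 𝒴 𝒵 ℝ}
    (hQ₁ : ∀ x, Q₁ x ∈ stdSimplex ℝ 𝒴) (hQ₂ : ∀ y, Q₂ y ∈ stdSimplex ℝ 𝒵) :
    ConcaveOn ℝ (stdSimplex ℝ 𝒳) (fun p => IY Q₁ p - IZ Q₁ Q₂ p) := by
  refine (concaveOn_vecMul_sub_sum (concaveOn_entropy_sub_entropy_vecMul hQ₂)
    (fun x => (hQ₁ x).1) fun x => entropy (Q₁ x) - entropy ((Q₁ * Q₂) x)).congr fun p hp => ?_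
  have hQ x : (Q₁ * Q₂) x ∈ stdSimplex ℝ 𝒵 := vecMul_mem_stdSimplex hQ₂ (hQ₁ x)
  rw [IZ_eq_IY_mul, IY_eq_entropy_sub hQ₁ hp.1, IY_eq_entropy_sub hQ hp.1, ← vecMul_vecMul]
  simp only [mul_sub, sum_sub_distrib]
  ring

theorem bddAbove_IY_sub_IZ {Q₁ : Matrix 𝒳 𝒴 ℝ} {Q₂ : Matrix 𝒴 𝒵 ℝ}
    (hQ₁ : ∀ x, Q₁ x ∈ stdSimplex ℝ 𝒴) (hQ₂ : ∀ y, Q₂ y ∈ stdSimplex ℝ 𝒵) :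
    BddAbove ((fun p => IY Q₁ p - IZ Q₁ Q₂ p) '' stdSimplex ℝ 𝒳) := by
  refine ⟨Fintype.card 𝒴, ?_⟩
  rintro _ ⟨p, hp, rfl⟩
  have hQ x : (Q₁ * Q₂) x ∈ stdSimplex ℝ 𝒵 := vecMul_mem_stdSimplex hQ₂ (hQ₁ x)
  linarith [IY_le_card hQ₁ hp, IY_nonneg hQ hp, IZ_eq_IY_mul Q₁ Q₂ p]

end MutualInformation

section Gamma

variable {𝒳 𝒴 𝒵 : Type} [Fintype 𝒳] [Fintype 𝒴] [Fintype 𝒵]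
  {Q₁ : 𝒳 → 𝒴 → ℝ} {Q₂ : 𝒴 → 𝒵 → ℝ} {φ : 𝒳 → ℝ}

theorem mem_Feas {r q : ℝ} {p : 𝒳 → ℝ} :
    p ∈ Feas Q₁ φ r q ↔ p ∈ stdSimplex ℝ 𝒳 ∧ r ≤ IY Q₁ p ∧ ∑ x, p x * φ x ≤ q :=
  and_assoc.symm

theorem Feas_subset_stdSimplex {r q : ℝ} : Feas Q₁ φ r q ⊆ stdSimplex ℝ 𝒳 :=
  fun _ hp => (mem_Feas.1 hp).1

theorem Feas_mono {r r' q q' : ℝ} (hr : r' ≤ r) (hq : q ≤ q') :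
    Feas Q₁ φ r q ⊆ Feas Q₁ φ r' q' := fun _ ⟨hp₀, hp₁, hpr, hpq⟩ =>
  ⟨hp₀, hp₁, hr.trans hpr, hpq.trans hq⟩

theorem convex_graph_Feas (hQ₁ : ∀ x, Q₁ x ∈ stdSimplex ℝ 𝒴) :
    Convex ℝ {x : (ℝ × ℝ) × (𝒳 → ℝ) | x.2 ∈ Feas Q₁ φ x.1.1 x.1.2} := by
  rintro ⟨⟨r₁, q₁⟩, p₁⟩ h₁ ⟨⟨r₂, q₂⟩, p₂⟩ h₂ a b ha hb hab
  obtain ⟨hp₁, hr₁, hq₁⟩ := mem_Feas.1 h₁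
  obtain ⟨hp₂, hr₂, hq₂⟩ := mem_Feas.1 h₂
  show a • p₁ + b • p₂ ∈ Feas Q₁ φ (a * r₁ + b * r₂) (a * q₁ + b * q₂)
  refine mem_Feas.2 ⟨convex_stdSimplex ℝ 𝒳 hp₁ hp₂ ha hb hab, ?_, ?_⟩
  · calc a * r₁ + b * r₂ ≤ a * IY Q₁ p₁ + b * IY Q₁ p₂ := by gcongr
      _ ≤ IY Q₁ (a • p₁ + b • p₂) := (concaveOn_IY hQ₁).2 hp₁ hp₂ ha hb hab
  · calc ∑ x, (a • p₁ + b • p₂) x * φ x = a * ∑ x, p₁ x * φ x + b * ∑ x, p₂ x * φ x := by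
          simp only [Pi.add_apply, Pi.smul_apply, smul_eq_mul, add_mul, sum_add_distrib,
            mul_sum, mul_assoc]
      _ ≤ a * q₁ + b * q₂ := by gcongr

theorem convex_GamDom (hQ₁ : ∀ x, Q₁ x ∈ stdSimplex ℝ 𝒴) : Convex ℝ (GamDom Q₁ φ) := by
  have h : GamDom Q₁ φ = Set.Ici 0 ∩ {u : ℝ × ℝ | (Feas Q₁ φ u.1 u.2).Nonempty} := by
    ext; simp [GamDom, Prod.le_def, and_assoc]
  rw [h]
  exact (convex_Ici 0).inter (convex_setOf_nonempty (convex_graph_Feas hQ₁))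

theorem concaveOn_Gam (hQ₁ : ∀ x, Q₁ x ∈ stdSimplex ℝ 𝒴) (hQ₂ : ∀ y, Q₂ y ∈ stdSimplex ℝ 𝒵) :
    ConcaveOn ℝ {u : ℝ × ℝ | (Feas Q₁ φ u.1 u.2).Nonempty} (fun u => Gam Q₁ Q₂ φ u.1 u.2) :=
  concaveOn_sSup_image (convex_graph_Feas hQ₁) (fun _ => Feas_subset_stdSimplex)
    (concaveOn_IY_sub_IZ hQ₁ hQ₂) (bddAbove_IY_sub_IZ hQ₁ hQ₂)

theorem Gam_mono (hQ₁ : ∀ x, Q₁ x ∈ stdSimplex ℝ 𝒴) (hQ₂ : ∀ y, Q₂ y ∈ stdSimplex ℝ 𝒵)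
    {r r' q q' : ℝ} (hne : (Feas Q₁ φ r q).Nonempty) (hr : r' ≤ r) (hq : q ≤ q') :
    Gam Q₁ Q₂ φ r q ≤ Gam Q₁ Q₂ φ r' q' :=
  csSup_le_csSup ((bddAbove_IY_sub_IZ hQ₁ hQ₂).mono (Set.image_mono Feas_subset_stdSimplex))
    (hne.image _) (Set.image_mono (Feas_mono hr hq))

end Gamma

end WynerGamma

open WynerGamma in
theorem stmt7_general {𝒳 𝒴 𝒵 : Type} [Fintype 𝒳] [Fintype 𝒴] [Fintype 𝒵]
    (Q1 : 𝒳 → 𝒴 → ℝ) (hQ10 : ∀ x y, 0 ≤ Q1 x y) (hQ11 : ∀ x, ∑ y, Q1 x y = 1)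
    (Q2 : 𝒴 → 𝒵 → ℝ) (hQ20 : ∀ y z, 0 ≤ Q2 y z) (hQ21 : ∀ y, ∑ z, Q2 y z = 1)
    (φ : 𝒳 → ℝ) :
    Convex ℝ (GamDom Q1 φ) ∧
    (∀ r1 q1 r2 q2 θ : ℝ, (r1, q1) ∈ GamDom Q1 φ → (r2, q2) ∈ GamDom Q1 φ →
      0 ≤ θ → θ ≤ 1 →
      θ * Gam Q1 Q2 φ r1 q1 + (1 - θ) * Gam Q1 Q2 φ r2 q2 ≤
        Gam Q1 Q2 φ (θ * r1 + (1 - θ) * r2) (θ * q1 + (1 - θ) * q2)) ∧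
    (∀ r1 r2 q : ℝ, (r1, q) ∈ GamDom Q1 φ → (r2, q) ∈ GamDom Q1 φ → r1 ≤ r2 →
      Gam Q1 Q2 φ r2 q ≤ Gam Q1 Q2 φ r1 q) ∧
    (∀ r q1 q2 : ℝ, (r, q1) ∈ GamDom Q1 φ → (r, q2) ∈ GamDom Q1 φ → q1 ≤ q2 →
      Gam Q1 Q2 φ r q1 ≤ Gam Q1 Q2 φ r q2) := by
  have hQ1 : ∀ x, Q1 x ∈ stdSimplex ℝ 𝒴 := fun x => ⟨hQ10 x, hQ11 x⟩
  have hQ2 : ∀ y, Q2 y ∈ stdSimplex ℝ 𝒵 := fun y => ⟨hQ20 y, hQ21 y⟩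
  refine ⟨convex_GamDom hQ1, fun r1 q1 r2 q2 θ h1 h2 hθ0 hθ1 => ?_,
    fun r1 r2 q _ h2 hr => Gam_mono hQ1 hQ2 h2.2.2 hr le_rfl,
    fun r q1 q2 h1 _ hq => Gam_mono hQ1 hQ2 h1.2.2 le_rfl hq⟩
  simpa using (concaveOn_Gam hQ1 hQ2).2 h1.2.2 h2.2.2 hθ0 (sub_nonneg.2 hθ1) (add_sub_cancel θ 1)

/-- (i) the domain of `Γ` is convex; (ii) `Γ` is concave on its domain;
(iii) `Γ` is nonincreasing in `r` and nondecreasing in `q`. -/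
theorem stmt7 {𝒳 𝒴 𝒵 : Type} [Fintype 𝒳] [Nonempty 𝒳] [Fintype 𝒴] [Nonempty 𝒴]
    [Fintype 𝒵] [Nonempty 𝒵]
    (Q1 : 𝒳 → 𝒴 → ℝ) (hQ10 : ∀ x y, 0 ≤ Q1 x y) (hQ11 : ∀ x, ∑ y, Q1 x y = 1)
    (Q2 : 𝒴 → 𝒵 → ℝ) (hQ20 : ∀ y z, 0 ≤ Q2 y z) (hQ21 : ∀ y, ∑ z, Q2 y z = 1)
    (φ : 𝒳 → ℝ) (hφ : ∀ x, 0 ≤ φ x) :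
    Convex ℝ (GamDom Q1 φ) ∧
    (∀ r1 q1 r2 q2 θ : ℝ, (r1, q1) ∈ GamDom Q1 φ → (r2, q2) ∈ GamDom Q1 φ →
      0 ≤ θ → θ ≤ 1 →
      θ * Gam Q1 Q2 φ r1 q1 + (1 - θ) * Gam Q1 Q2 φ r2 q2 ≤
        Gam Q1 Q2 φ (θ * r1 + (1 - θ) * r2) (θ * q1 + (1 - θ) * q2)) ∧
    (∀ r1 r2 q : ℝ, (r1, q) ∈ GamDom Q1 φ → (r2, q) ∈ GamDom Q1 φ → r1 ≤ r2 →
      Gam Q1 Q2 φ r2 q ≤ Gam Q1 Q2 φ r1 q) ∧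
    (∀ r q1 q2 : ℝ, (r, q1) ∈ GamDom Q1 φ → (r, q2) ∈ GamDom Q1 φ → q1 ≤ q2 →
      Gam Q1 Q2 φ r q1 ≤ Gam Q1 Q2 φ r q2) :=
  stmt7_general Q1 hQ10 hQ11 Q2 hQ20 hQ21 φ
end

section
/- Let 𝒰, 𝒱, 𝒰̂ be finite types, let (U,V) be a random pair in 𝒰 × 𝒱, and let d: 𝒰 × 𝒰̂ → ℝ≥0 be a distortion measure. The Wyner–Ziv rate–distortion function R_{U|V}(D) := inf { I(U;A) − I(V;A) : A a random variable in a finite type with at most |𝒰|+1 elements, jointly distributed with (U,V), conditionally independent of V given U, such that there exists ψ: 𝒜 × 𝒱 → 𝒰̂ with E[d(U,ψ(A,V))] ≤ D } is, as a function of D on the set of D ≥ 0 for which the constraint set is nonempty, (i) nonincreasing and (ii) convex: for such D₁, D₂ and θ ∈ [0,1], R_{U|V}(θD₁ + (1−θ)D₂) ≤ θ·R_{U|V}(D₁) + (1−θ)·R_{U|V}(D₂). -/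
/-!
An element of the constraint set is the same thing as a code: weights `w a = P(A = a)`,
conditional laws `μ a` of `U` given `A = a` averaging to the law of `U`, and decoders `ψ a`.
Conditional independence forces the law of `(U, V)` given `A = a` to be `μ a` followed by the
channel `P(V | U)`, so rate and distortion are `w`-averages of per-atom quantities.

Monotonicity is inclusion of constraint sets. For convexity, time sharing two codes on the
disjoint union of their alphabets mixes rate and distortion linearly, but uses `2 (|𝒰| + 1)`
atoms. The vectors `(μ a, distortion of atom a)` lie on the hyperplane `∑ μ = 1` of a space of
dimension `|𝒰| + 1`, so moving the weights along linear relations among them (as in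
Carathéodory's theorem, always in the direction that does not increase the rate) leaves at most
`|𝒰| + 1` atoms with the same `U`-marginal and distortion.
-/

open scoped BigOperators

/-- The constraint set of the Wyner--Ziv rate--distortion function of a pair `(U,V)`
with joint law `qUV`, reproduction alphabet `𝒰h` and distortion measure `d`, at
distortion level `D`: values `I(U;A) − I(V;A)` over joint laws `q` of `(A,U,V)` with
`A` in an auxiliary alphabet of `|𝒰|+1` elements, `(U,V)`-marginal `qUV`, `A`
conditionally independent of `V` given `U`, admitting `ψ` with `E[d(U,ψ(A,V))] ≤ D`. -/
def WZset {𝒰 𝒱 𝒰h : Type} [Fintype 𝒰] [Fintype 𝒱] [Fintype 𝒰h]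
    (qUV : 𝒰 × 𝒱 → ℝ) (d : 𝒰 → 𝒰h → ℝ) (D : ℝ) : Set ℝ :=
  {ρ | ∃ q : Fin (Fintype.card 𝒰 + 1) × 𝒰 × 𝒱 → ℝ,
    (∀ z, 0 ≤ q z) ∧ (∑ z, q z = 1) ∧
    (∀ u v, (∑ a, q (a, u, v)) = qUV (u, v)) ∧
    (∀ a u v, 0 < (∑ a', ∑ v', q (a', u, v')) →
      q (a, u, v) * (∑ a', ∑ v', q (a', u, v')) =
        (∑ v', q (a, u, v')) * (∑ a', q (a', u, v))) ∧
    (∃ ψ : Fin (Fintype.card 𝒰 + 1) → 𝒱 → 𝒰h,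
      (∑ a, ∑ u, ∑ v, q (a, u, v) * d u (ψ a v)) ≤ D) ∧
    ρ = miJoint (fun (u : 𝒰) (a : Fin (Fintype.card 𝒰 + 1)) => ∑ v, q (a, u, v))
        - miJoint (fun (v : 𝒱) (a : Fin (Fintype.card 𝒰 + 1)) => ∑ u, q (a, u, v))}

/-- The Wyner--Ziv rate--distortion function `R_{U|V}(D)`. -/
noncomputable def WZ {𝒰 𝒱 𝒰h : Type} [Fintype 𝒰] [Fintype 𝒱] [Fintype 𝒰h]
    (qUV : 𝒰 × 𝒱 → ℝ) (d : 𝒰 → 𝒰h → ℝ) (D : ℝ) : ℝ :=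
  sInf (WZset qUV d D)

open Finset Real Module

noncomputable section

theorem abs_mul_log_div_mul_le_one {s a b : ℝ} (hs : 0 ≤ s) (ha : s ≤ a) (hb : s ≤ b)
    (ha1 : a ≤ 1) (hb1 : b ≤ 1) : |s * log (s / (a * b))| ≤ 1 := by
  rcases hs.eq_or_lt with rfl | hs
  · simp
  have hab : 0 < a * b := mul_pos (hs.trans_le ha) (hs.trans_le hb)
  have hlog : |log (s / (a * b))| ≤ |log s| := by
    rw [abs_le, abs_of_nonpos (log_nonpos hs.le (ha.trans ha1)), neg_neg, ← log_inv]
    constructor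
    · exact log_le_log hs (le_div_self hs.le hab (by nlinarith))
    · refine log_le_log (by positivity) ?_
      rw [div_le_iff₀ hab, ← div_eq_inv_mul, le_div_iff₀ hs]
      nlinarith
  calc |s * log (s / (a * b))| = s * |log (s / (a * b))| := by rw [abs_mul, abs_of_pos hs]
    _ ≤ s * |log s| := by gcongr
    _ = |log s * s| := by rw [abs_mul, abs_of_pos hs, mul_comm]
    _ ≤ 1 := (abs_log_mul_self_lt s hs (ha.trans ha1)).le

theorem abs_miJoint_le {α β : Type} [Fintype α] [Fintype β] (P : α → β → ℝ)
    (h0 : ∀ x y, 0 ≤ P x y) (h1 : ∑ x, ∑ y, P x y = 1) :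
    |miJoint P| ≤ Fintype.card α * Fintype.card β := by
  have hrow : ∀ x, ∑ y, P x y ≤ 1 := fun x =>
    h1 ▸ single_le_sum (f := fun x => ∑ y, P x y)
      (fun x _ => sum_nonneg fun y _ => h0 x y) (mem_univ x)
  have hcol : ∀ y, ∑ x, P x y ≤ 1 := fun y =>
    (sum_comm.trans h1) ▸ single_le_sum (f := fun y => ∑ x, P x y)
      (fun y _ => sum_nonneg fun x _ => h0 x y) (mem_univ y)
  calc |miJoint P|
      ≤ ∑ x, ∑ y, |P x y * log (P x y / ((∑ y', P x y') * (∑ x', P x' y)))| :=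
        (abs_sum_le_sum_abs _ _).trans (sum_le_sum fun x _ => abs_sum_le_sum_abs _ _)
    _ ≤ ∑ _x : α, ∑ _y : β, (1 : ℝ) := by
        gcongr with x _ y _
        exact abs_mul_log_div_mul_le_one (h0 x y)
          (single_le_sum (fun y _ => h0 x y) (mem_univ y))
          (single_le_sum (fun x _ => h0 x y) (mem_univ x)) (hrow x) (hcol y)
    _ = Fintype.card α * Fintype.card β := by simp

def relEntropy {α : Type} [Fintype α] (p q : α → ℝ) : ℝ :=
  ∑ x, p x * log (p x / q x)

theorem miJoint_mul_eq_sum_relEntropy {α β : Type} [Fintype α] [Fintype β]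
    (w : β → ℝ) (μ : β → α → ℝ) (hμ : ∀ b, w b * ∑ x, μ b x = w b) :
    miJoint (fun x b => w b * μ b x) =
      ∑ b, w b * relEntropy (μ b) (fun x => ∑ b', w b' * μ b' x) := by
  unfold miJoint relEntropy
  rw [sum_comm]
  refine sum_congr rfl fun b _ => ?_
  rw [← mul_sum, hμ b, mul_sum]
  refine sum_congr rfl fun x _ => ?_
  rcases eq_or_ne (w b) 0 with hb | hb
  · simp [hb]
  · rw [mul_comm (∑ b', _) (w b), mul_div_mul_left _ _ hb, mul_assoc]

theorem sInf_le_mul_sInf_add_mul_sInf {S₁ S₂ T : Set ℝ} (hS₁ : S₁.Nonempty) (hS₁b : BddBelow S₁)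
    (hS₂ : S₂.Nonempty) (hS₂b : BddBelow S₂) (hTb : BddBelow T) {θ : ℝ} (hθ₀ : 0 ≤ θ)
    (hθ₁ : θ ≤ 1) (h : ∀ x ∈ S₁, ∀ y ∈ S₂, ∃ z ∈ T, z ≤ θ * x + (1 - θ) * y) :
    sInf T ≤ θ * sInf S₁ + (1 - θ) * sInf S₂ := by
  have hθ₁' : 0 ≤ 1 - θ := sub_nonneg.2 hθ₁
  rw [← smul_eq_mul, ← smul_eq_mul, ← Real.sInf_smul_of_nonneg hθ₀,
    ← Real.sInf_smul_of_nonneg hθ₁', ← csInf_add (hS₁.smul_set) (hS₁b.smul_of_nonneg hθ₀)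
    (hS₂.smul_set) (hS₂b.smul_of_nonneg hθ₁')]
  refine le_csInf (hS₁.smul_set.add hS₂.smul_set) ?_
  rintro _ ⟨_, ⟨x, hx, rfl⟩, _, ⟨y, hy, rfl⟩, rfl⟩
  obtain ⟨z, hz, hzle⟩ := h x hx y hy
  exact (csInf_le hTb hz).trans hzle

theorem exists_sub_mul_nonneg_card_lt {ι : Type} [Fintype ι] (w c : ι → ℝ) (hw : ∀ j, 0 ≤ w j)
    (hc_supp : ∀ j, w j = 0 → c j = 0) (hc_sum : ∑ j, c j = 0) (hc : c ≠ 0) :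
    ∃ t : ℝ, 0 ≤ t ∧ (∀ j, 0 ≤ w j - t * c j) ∧ #{j | w j - t * c j ≠ 0} < #{j | w j ≠ 0} := by
  classical
  have hpos : ({j | 0 < c j} : Finset ι).Nonempty := by
    by_contra h
    simp only [not_nonempty_iff_eq_empty, filter_eq_empty_iff, mem_univ, true_implies,
      not_lt] at h
    exact hc (funext fun j => (sum_eq_zero_iff_of_nonpos fun j _ => @h j).1 hc_sum j (mem_univ j))
  -- the largest step keeping all weights nonnegative kills the weight at `j₀`
  obtain ⟨j₀, hj₀, hmin⟩ := exists_min_image _ (fun j => w j / c j) hpos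
  have hcj₀ : 0 < c j₀ := (mem_filter.1 hj₀).2
  refine ⟨w j₀ / c j₀, div_nonneg (hw j₀) hcj₀.le, fun j => ?_,
    card_lt_card ⟨fun j hj => ?_, fun hsub => ?_⟩⟩
  · rcases le_or_gt (c j) 0 with hcj | hcj
    · nlinarith [hw j, div_nonneg (hw j₀) hcj₀.le]
    · have := hmin j (mem_filter.2 ⟨mem_univ j, hcj⟩)
      rw [div_le_div_iff₀ hcj₀ hcj] at this
      rw [sub_nonneg, div_mul_eq_mul_div, div_le_iff₀ hcj₀]
      linarith
  · simp only [mem_filter, mem_univ, true_and] at hj ⊢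
    intro hwj
    simp [hwj, hc_supp j hwj] at hj
  · have hwj₀ : w j₀ ≠ 0 := fun h => hcj₀.ne' (hc_supp j₀ h)
    have := hsub (mem_filter.2 ⟨mem_univ j₀, hwj₀⟩)
    simp [div_mul_cancel₀ _ hcj₀.ne'] at this

section Caratheodory

variable {ι E : Type} [Fintype ι] [AddCommGroup E] [Module ℝ E] [FiniteDimensional ℝ E]

theorem exists_ne_zero_sum_smul_eq_zero_of_finrank_lt (z : ι → E) (s : Finset ι)
    (hs : finrank ℝ E < #s) : ∃ c : ι → ℝ, (∀ j ∉ s, c j = 0) ∧ c ≠ 0 ∧ ∑ j, c j • z j = 0 := by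
  classical
  have hdep : ¬LinearIndepOn ℝ z (s : Set ι) := fun h => by
    have := h.fintype_card_le_finrank
    simp only [Finset.coe_sort_coe, Fintype.card_coe] at this
    omega
  obtain ⟨c, hcz, j, hj, hcj⟩ := not_linearIndepOn_finset_iff.1 hdep
  refine ⟨fun j => if j ∈ s then c j else 0, fun j hj => if_neg hj,
    fun h => hcj (by simpa [hj] using congrFun h j), ?_⟩
  simpa [ite_smul, sum_ite_mem] using hcz

/-- `hz` puts the points on the affine hyperplane `L = 1`; this is what brings the number of
atoms down to `finrank ℝ E` rather than `finrank ℝ E + 1`. -/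
theorem exists_weights_card_le_finrank (L : E →ₗ[ℝ] ℝ) (z : ι → E) (hz : ∀ j, L (z j) = 1)
    (f : ι → ℝ) (w : ι → ℝ) (hw : ∀ j, 0 ≤ w j) :
    ∃ w' : ι → ℝ, (∀ j, 0 ≤ w' j) ∧ #{j | w' j ≠ 0} ≤ finrank ℝ E ∧
      ∑ j, w' j • z j = ∑ j, w j • z j ∧ ∑ j, w' j * f j ≤ ∑ j, w j * f j := by
  classical
  induction hn : #{j | w j ≠ 0} using Nat.strong_induction_on generalizing w with
  | _ n ih =>
  by_cases hle : n ≤ finrank ℝ E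
  · exact ⟨w, hw, hn ▸ hle, rfl, le_rfl⟩
  obtain ⟨c, hc_supp, hc, hcz⟩ :=
    exists_ne_zero_sum_smul_eq_zero_of_finrank_lt z {j | w j ≠ 0} (by omega)
  replace hc_supp : ∀ j, w j = 0 → c j = 0 := fun j hj => hc_supp j (by simp [hj])
  have hc_sum : ∑ j, c j = 0 := by simpa [hz] using congrArg L hcz
  -- orient the relation so that moving along it does not increase the objective
  obtain ⟨c, hc_supp, hc, hcz, hc_sum, hcf⟩ : ∃ c : ι → ℝ, (∀ j, w j = 0 → c j = 0) ∧ c ≠ 0 ∧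
      ∑ j, c j • z j = 0 ∧ ∑ j, c j = 0 ∧ 0 ≤ ∑ j, c j * f j := by
    rcases le_total 0 (∑ j, c j * f j) with h | h
    · exact ⟨c, hc_supp, hc, hcz, hc_sum, h⟩
    · refine ⟨-c, fun j hj => by simp [hc_supp j hj], neg_ne_zero.2 hc, ?_, ?_, ?_⟩ <;>
        simpa [sum_neg_distrib] using by assumption
  obtain ⟨t, ht₀, ht, hcard⟩ := exists_sub_mul_nonneg_card_lt w c hw hc_supp hc_sum hc
  obtain ⟨w', hw', hcard', hwz, hwf⟩ := ih _ (hn ▸ hcard) _ ht rfl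
  refine ⟨w', hw', hcard', ?_, ?_⟩
  · simp [hwz, sub_smul, sum_sub_distrib, mul_smul, ← smul_sum, hcz]
  · refine hwf.trans ?_
    simp only [sub_mul, sum_sub_distrib, mul_assoc, ← mul_sum]
    linarith [mul_nonneg ht₀ hcf]

end Caratheodory

section WynerZiv

variable {𝒰 𝒱 𝒰h : Type} [Fintype 𝒱] (qUV : 𝒰 × 𝒱 → ℝ)

def margU (u : 𝒰) : ℝ := ∑ v, qUV (u, v)

/-- `μ u * P(V = v | U = u)`; it vanishes where `margU qUV u = 0` since `x / 0 = 0`. -/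
def markovLift (μ : 𝒰 → ℝ) (u : 𝒰) (v : 𝒱) : ℝ := μ u * qUV (u, v) / margU qUV u

theorem sum_markovLift (μ : 𝒰 → ℝ) (u : 𝒰) :
    ∑ v, markovLift qUV μ u v = μ u * margU qUV u / margU qUV u := by
  simp only [markovLift, ← sum_div, ← mul_sum, margU]

variable {qUV}

theorem margU_nonneg (hq0 : ∀ uv, 0 ≤ qUV uv) (u : 𝒰) : 0 ≤ margU qUV u :=
  sum_nonneg fun _ _ => hq0 _

theorem margU_mul_div_margU (hq0 : ∀ uv, 0 ≤ qUV uv) (u : 𝒰) (v : 𝒱) :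
    margU qUV u * qUV (u, v) / margU qUV u = qUV (u, v) := by
  rcases eq_or_ne (margU qUV u) 0 with h | h
  · rw [h, zero_mul, zero_div]
    exact ((sum_eq_zero_iff_of_nonneg fun v _ => hq0 (u, v)).1 h v (mem_univ v)).symm
  · exact mul_div_cancel_left₀ _ h

theorem eq_mul_div_margU_of_condIndep {A : Type} [Fintype A] {q : A × 𝒰 × 𝒱 → ℝ}
    (h0 : ∀ z, 0 ≤ q z) (hmarg : ∀ u v, ∑ a, q (a, u, v) = qUV (u, v))
    (hci : ∀ a u v, 0 < ∑ a', ∑ v', q (a', u, v') →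
      q (a, u, v) * ∑ a', ∑ v', q (a', u, v') = (∑ v', q (a, u, v')) * ∑ a', q (a', u, v))
    (a : A) (u : 𝒰) (v : 𝒱) : q (a, u, v) = (∑ v', q (a, u, v')) * qUV (u, v) / margU qUV u := by
  have hU : ∑ a', ∑ v', q (a', u, v') = margU qUV u := by
    rw [sum_comm]
    exact sum_congr rfl fun v' _ => hmarg u v'
  rcases (hU ▸ sum_nonneg fun _ _ => sum_nonneg fun _ _ => h0 _ : 0 ≤ margU qUV u).eq_or_lt
    with hu | hu
  · rw [← hu, div_zero]
    have := (sum_eq_zero_iff_of_nonneg fun _ _ => sum_nonneg fun _ _ => h0 _).1 (hU.trans hu.symm) a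
      (mem_univ a)
    exact (sum_eq_zero_iff_of_nonneg fun _ _ => h0 _).1 this v (mem_univ v)
  · rw [eq_div_iff hu.ne', ← hmarg, ← hci a u v (hU ▸ hu), hU]

variable (qUV) [Fintype 𝒰]

def margV (v : 𝒱) : ℝ := ∑ u, qUV (u, v)

def atomRate (μ : 𝒰 → ℝ) : ℝ :=
  relEntropy μ (margU qUV) - relEntropy (fun v => ∑ u, markovLift qUV μ u v) (margV qUV)

def atomDistortion (d : 𝒰 → 𝒰h → ℝ) (μ : 𝒰 → ℝ) (g : 𝒱 → 𝒰h) : ℝ :=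
  ∑ u, ∑ v, markovLift qUV μ u v * d u (g v)

/-- A Wyner–Ziv code with auxiliary alphabet `ι`: `A = j` has probability `w j`, the conditional
law of `U` given `A = j` is `μ j`, and `ψ j` is the decoder used when `A = j`. -/
structure WZCode (𝒰h ι : Type) [Fintype ι] where
  w : ι → ℝ
  μ : ι → 𝒰 → ℝ
  ψ : ι → 𝒱 → 𝒰h
  w_nonneg : ∀ j, 0 ≤ w j
  μ_nonneg : ∀ j u, 0 ≤ μ j u
  sum_μ : ∀ j, ∑ u, μ j u = 1
  sum_w_mul_μ : ∀ u, ∑ j, w j * μ j u = margU qUV u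

variable {qUV}

namespace WZCode

variable {ι : Type} [Fintype ι] (c : WZCode qUV 𝒰h ι)

def rate : ℝ := ∑ j, c.w j * atomRate qUV (c.μ j)

def distortion (d : 𝒰 → 𝒰h → ℝ) : ℝ := ∑ j, c.w j * atomDistortion qUV d (c.μ j) (c.ψ j)

def joint (z : ι × 𝒰 × 𝒱) : ℝ := c.w z.1 * markovLift qUV (c.μ z.1) z.2.1 z.2.2

theorem w_mul_μ_eq_zero {u : 𝒰} (hu : margU qUV u = 0) (j : ι) : c.w j * c.μ j u = 0 :=
  (sum_eq_zero_iff_of_nonneg fun j _ => mul_nonneg (c.w_nonneg j) (c.μ_nonneg j u)).1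
    (c.sum_w_mul_μ u ▸ hu) j (mem_univ j)

theorem w_mul_sum_markovLift (a : ι) (u : 𝒰) :
    c.w a * ∑ v, markovLift qUV (c.μ a) u v = c.w a * c.μ a u := by
  rw [sum_markovLift]
  rcases eq_or_ne (margU qUV u) 0 with hu | hu
  · rw [hu, div_zero, mul_zero, c.w_mul_μ_eq_zero hu]
  · rw [mul_div_cancel_right₀ _ hu]

theorem sum_joint_eq_w_mul_μ (a : ι) (u : 𝒰) : ∑ v, c.joint (a, u, v) = c.w a * c.μ a u := by
  rw [← c.w_mul_sum_markovLift, mul_sum]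
  rfl

theorem sum_joint_eq_qUV (hq0 : ∀ uv, 0 ≤ qUV uv) (u : 𝒰) (v : 𝒱) :
    ∑ a, c.joint (a, u, v) = qUV (u, v) := by
  simp only [joint, markovLift, mul_div_assoc', ← mul_assoc, ← sum_div, ← sum_mul,
    c.sum_w_mul_μ, margU_mul_div_margU hq0]

theorem rate_eq_miJoint_sub_miJoint (hq0 : ∀ uv, 0 ≤ qUV uv) :
    c.rate =
      miJoint (fun u a => ∑ v, c.joint (a, u, v)) - miJoint (fun v a => ∑ u, c.joint (a, u, v)) := by
  have hU : miJoint (fun u a => ∑ v, c.joint (a, u, v)) =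
      ∑ a, c.w a * relEntropy (c.μ a) (margU qUV) := by
    simp only [sum_joint_eq_w_mul_μ]
    rw [miJoint_mul_eq_sum_relEntropy _ _ fun a => by rw [c.sum_μ, mul_one]]
    simp only [c.sum_w_mul_μ]
  have hV : miJoint (fun v a => ∑ u, c.joint (a, u, v)) =
      ∑ a, c.w a * relEntropy (fun v => ∑ u, markovLift qUV (c.μ a) u v) (margV qUV) := by
    simp only [joint, ← mul_sum]
    rw [miJoint_mul_eq_sum_relEntropy]
    · congr! with a _ v
      simp only [mul_sum]
      rw [sum_comm]
      exact sum_congr rfl fun u _ => c.sum_joint_eq_qUV hq0 u v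
    · intro a
      rw [sum_comm, mul_sum]
      simp only [w_mul_sum_markovLift, ← mul_sum, c.sum_μ, mul_one]
  rw [hU, hV, rate, ← sum_sub_distrib]
  simp only [atomRate, mul_sub]

theorem distortion_eq_sum_joint_mul (d : 𝒰 → 𝒰h → ℝ) :
    c.distortion d = ∑ a, ∑ u, ∑ v, c.joint (a, u, v) * d u (c.ψ a v) := by
  simp only [distortion, atomDistortion, joint, mul_sum, mul_assoc]

theorem rate_mem_WZset [Fintype 𝒰h] (hq0 : ∀ uv, 0 ≤ qUV uv) (hq1 : ∑ uv, qUV uv = 1)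
    {d : 𝒰 → 𝒰h → ℝ} {D : ℝ} (c : WZCode qUV 𝒰h (Fin (Fintype.card 𝒰 + 1)))
    (hD : c.distortion d ≤ D) : c.rate ∈ WZset qUV d D := by
  refine ⟨c.joint, fun z => ?_, ?_, c.sum_joint_eq_qUV hq0, fun a u v hpos => ?_,
    ⟨c.ψ, c.distortion_eq_sum_joint_mul d ▸ hD⟩, c.rate_eq_miJoint_sub_miJoint hq0⟩
  · exact mul_nonneg (c.w_nonneg _)
      (div_nonneg (mul_nonneg (c.μ_nonneg _ _) (hq0 _)) (margU_nonneg hq0 _))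
  · rw [Fintype.sum_prod_type, sum_comm, ← hq1]
    exact sum_congr rfl fun y _ => c.sum_joint_eq_qUV hq0 y.1 y.2
  · have hU : ∑ a', ∑ v', c.joint (a', u, v') = margU qUV u := by
      rw [sum_comm]
      exact sum_congr rfl fun v' _ => c.sum_joint_eq_qUV hq0 u v'
    rw [hU] at hpos ⊢
    rw [c.sum_joint_eq_w_mul_μ, c.sum_joint_eq_qUV hq0]
    simp only [joint, markovLift]
    field_simp

variable {ι₁ ι₂ : Type} [Fintype ι₁] [Fintype ι₂]

def mix (c₁ : WZCode qUV 𝒰h ι₁) (c₂ : WZCode qUV 𝒰h ι₂) {θ : ℝ} (hθ₀ : 0 ≤ θ) (hθ₁ : θ ≤ 1) :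
    WZCode qUV 𝒰h (ι₁ ⊕ ι₂) where
  w := Sum.elim (fun j => θ * c₁.w j) (fun j => (1 - θ) * c₂.w j)
  μ := Sum.elim c₁.μ c₂.μ
  ψ := Sum.elim c₁.ψ c₂.ψ
  w_nonneg := by
    rintro (j | j)
    · exact mul_nonneg hθ₀ (c₁.w_nonneg j)
    · exact mul_nonneg (sub_nonneg.2 hθ₁) (c₂.w_nonneg j)
  μ_nonneg := by rintro (j | j) <;> simp [c₁.μ_nonneg, c₂.μ_nonneg]
  sum_μ := by rintro (j | j) <;> simp [c₁.sum_μ, c₂.sum_μ]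
  sum_w_mul_μ u := by
    simp only [Fintype.sum_sum_type, Sum.elim_inl, Sum.elim_inr, mul_assoc, ← mul_sum,
      c₁.sum_w_mul_μ, c₂.sum_w_mul_μ]
    ring

variable (c₁ : WZCode qUV 𝒰h ι₁) (c₂ : WZCode qUV 𝒰h ι₂) {θ : ℝ} (hθ₀ : 0 ≤ θ) (hθ₁ : θ ≤ 1)

theorem rate_mix : (c₁.mix c₂ hθ₀ hθ₁).rate = θ * c₁.rate + (1 - θ) * c₂.rate := by
  simp only [rate, mix, Fintype.sum_sum_type, Sum.elim_inl, Sum.elim_inr, mul_sum, mul_assoc]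

theorem distortion_mix (d : 𝒰 → 𝒰h → ℝ) :
    (c₁.mix c₂ hθ₀ hθ₁).distortion d = θ * c₁.distortion d + (1 - θ) * c₂.distortion d := by
  simp only [distortion, mix, Fintype.sum_sum_type, Sum.elim_inl, Sum.elim_inr, mul_sum,
    mul_assoc]

theorem exists_card_support_le (d : 𝒰 → 𝒰h → ℝ) :
    ∃ c' : WZCode qUV 𝒰h ι, #{j | c'.w j ≠ 0} ≤ Fintype.card 𝒰 + 1 ∧ c'.rate ≤ c.rate ∧
      c'.distortion d = c.distortion d := by
  let L : (𝒰 → ℝ) × ℝ →ₗ[ℝ] ℝ := (∑ u, LinearMap.proj u) ∘ₗ LinearMap.fst ℝ (𝒰 → ℝ) ℝ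
  obtain ⟨w', hw', hcard, hz, hrate⟩ := exists_weights_card_le_finrank L
    (fun j => (c.μ j, atomDistortion qUV d (c.μ j) (c.ψ j))) (fun j => by simp [L, c.sum_μ])
    (fun j => atomRate qUV (c.μ j)) c.w c.w_nonneg
  have hμ : ∀ u, ∑ j, w' j * c.μ j u = ∑ j, c.w j * c.μ j u := fun u => by
    simpa [Prod.fst_sum, Finset.sum_apply] using congrFun (congrArg Prod.fst hz) u
  refine ⟨{ c with
      w := w'
      w_nonneg := hw'
      sum_w_mul_μ := fun u => (hμ u).trans (c.sum_w_mul_μ u) },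
    by simpa using hcard, hrate, by simpa [distortion, Prod.snd_sum] using congrArg Prod.snd hz⟩

variable {κ : Type} [Fintype κ]

theorem exists_reindex [Nonempty ι] (d : 𝒰 → 𝒰h → ℝ) (h : #{j | c.w j ≠ 0} ≤ Fintype.card κ) :
    ∃ c' : WZCode qUV 𝒰h κ, c'.rate = c.rate ∧ c'.distortion d = c.distortion d := by
  classical
  obtain ⟨f⟩ : Nonempty ({j // c.w j ≠ 0} ↪ κ) :=
    Function.Embedding.nonempty_of_card_le (by rwa [Fintype.card_subtype])
  obtain ⟨j₀⟩ := ‹Nonempty ι›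
  let w' := Function.extend f (fun j => c.w j) 0
  let μ' := Function.extend f (fun j => c.μ j) fun _ => c.μ j₀
  let ψ' := Function.extend f (fun j => c.ψ j) fun _ => c.ψ j₀
  have hatom : ∀ b, ∃ j, μ' b = c.μ j ∧ (w' b = c.w j ∨ w' b = 0) := fun b => by
    by_cases hb : ∃ j, f j = b
    · obtain ⟨j, rfl⟩ := hb
      exact ⟨j, f.injective.extend_apply _ _ _, .inl (f.injective.extend_apply _ _ _)⟩
    · exact ⟨j₀, Function.extend_apply' _ _ _ hb, .inr (Function.extend_apply' _ _ _ hb)⟩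
  have hsum : ∀ G : (𝒰 → ℝ) → (𝒱 → 𝒰h) → ℝ,
      ∑ b, w' b * G (μ' b) (ψ' b) = ∑ j, c.w j * G (c.μ j) (c.ψ j) := fun G => by
    rw [← Fintype.sum_of_injective f f.injective (fun j => c.w j * G (c.μ j) (c.ψ j)) _
      (fun b hb => by simp [w', Function.extend_apply' _ _ _ hb])
      (fun j => by simp only [w', μ', ψ', f.injective.extend_apply])]
    exact Fintype.sum_of_injective _ Subtype.val_injective _ _
      (fun j hj => by simp_all) (fun _ => rfl)
  refine ⟨⟨w', μ', ψ', fun b => ?_, fun b => ?_, fun b => ?_, fun u => ?_⟩,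
    hsum fun μ _ => atomRate qUV μ, hsum (atomDistortion qUV d)⟩
  · obtain ⟨j, -, hw | hw⟩ := hatom b <;> simp [hw, c.w_nonneg]
  · obtain ⟨j, hμ, -⟩ := hatom b
    exact hμ ▸ c.μ_nonneg j
  · obtain ⟨j, hμ, -⟩ := hatom b
    exact hμ ▸ c.sum_μ j
  · exact (hsum fun μ _ => μ u).trans (c.sum_w_mul_μ u)

end WZCode

theorem exists_WZCode_joint_eq [Fintype 𝒰h] (hq0 : ∀ uv, 0 ≤ qUV uv) (hq1 : ∑ uv, qUV uv = 1)
    {A : Type} [Fintype A] {q : A × 𝒰 × 𝒱 → ℝ} (h0 : ∀ z, 0 ≤ q z)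
    (hmarg : ∀ u v, ∑ a, q (a, u, v) = qUV (u, v))
    (hci : ∀ a u v, 0 < ∑ a', ∑ v', q (a', u, v') →
      q (a, u, v) * ∑ a', ∑ v', q (a', u, v') = (∑ v', q (a, u, v')) * ∑ a', q (a', u, v))
    (ψ : A → 𝒱 → 𝒰h) : ∃ c : WZCode qUV 𝒰h A, c.ψ = ψ ∧ c.joint = q := by
  let w a := ∑ u, ∑ v, q (a, u, v)
  have hw : ∀ a, 0 ≤ w a := fun a => sum_nonneg fun _ _ => sum_nonneg fun _ _ => h0 _
  let μ a : 𝒰 → ℝ := if w a = 0 then margU qUV else fun u => (∑ v, q (a, u, v)) / w a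
  have hwμ : ∀ a u, w a * μ a u = ∑ v, q (a, u, v) := fun a u => by
    by_cases ha : w a = 0
    · rw [ha, zero_mul]
      exact ((sum_eq_zero_iff_of_nonneg fun _ _ => sum_nonneg fun _ _ => h0 _).1 ha u
        (mem_univ u)).symm
    · simp only [μ, if_neg ha, mul_div_cancel₀ _ ha]
  let c : WZCode qUV 𝒰h A :=
    { w, μ, ψ
      w_nonneg := hw
      μ_nonneg := fun a u => by
        by_cases ha : w a = 0
        · simpa [μ, ha] using margU_nonneg hq0 u
        · simp only [μ, if_neg ha]
          exact div_nonneg (sum_nonneg fun _ _ => h0 _) (hw a)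
      sum_μ := fun a => by
        by_cases ha : w a = 0
        · simp only [μ, if_pos ha, margU, ← hq1, Fintype.sum_prod_type]
        · simp only [μ, if_neg ha, ← sum_div]
          exact div_self ha
      sum_w_mul_μ := fun u => by
        simp only [hwμ]
        rw [sum_comm]
        exact sum_congr rfl fun v _ => hmarg u v }
  refine ⟨c, rfl, funext fun ⟨a, u, v⟩ => ?_⟩
  rw [eq_mul_div_margU_of_condIndep h0 hmarg hci, ← hwμ]
  simp only [WZCode.joint, markovLift, c, mul_div_assoc, mul_assoc]

theorem exists_WZCode_of_mem_WZset [Fintype 𝒰h] (hq0 : ∀ uv, 0 ≤ qUV uv)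
    (hq1 : ∑ uv, qUV uv = 1) {d : 𝒰 → 𝒰h → ℝ} {D ρ : ℝ} (h : ρ ∈ WZset qUV d D) :
    ∃ c : WZCode qUV 𝒰h (Fin (Fintype.card 𝒰 + 1)), c.rate = ρ ∧ c.distortion d ≤ D := by
  obtain ⟨q, h0, -, hmarg, hci, ⟨ψ, hψ⟩, rfl⟩ := h
  obtain ⟨c, rfl, rfl⟩ := exists_WZCode_joint_eq hq0 hq1 h0 hmarg hci ψ
  exact ⟨c, c.rate_eq_miJoint_sub_miJoint hq0, (c.distortion_eq_sum_joint_mul d).trans_le hψ⟩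

end WynerZiv

section WZset

variable {𝒰 𝒱 𝒰h : Type} [Fintype 𝒰] [Fintype 𝒱] [Fintype 𝒰h] {qUV : 𝒰 × 𝒱 → ℝ}
  {d : 𝒰 → 𝒰h → ℝ}

theorem WZset_mono : Monotone (WZset qUV d) := by
  rintro D₁ D₂ hD ρ ⟨q, h0, h1, hmarg, hci, ⟨ψ, hψ⟩, hρ⟩
  exact ⟨q, h0, h1, hmarg, hci, ⟨ψ, hψ.trans hD⟩, hρ⟩

theorem bddBelow_WZset (D : ℝ) : BddBelow (WZset qUV d D) := by
  refine ⟨-(Fintype.card 𝒰 * (Fintype.card 𝒰 + 1) + Fintype.card 𝒱 * (Fintype.card 𝒰 + 1)),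
    ?_⟩
  rintro _ ⟨q, h0, h1, -, -, -, rfl⟩
  have htotal : ∑ a, ∑ u, ∑ v, q (a, u, v) = 1 := by
    simpa only [Fintype.sum_prod_type] using h1
  have hU := abs_miJoint_le (fun u a => ∑ v, q (a, u, v))
    (fun _ _ => sum_nonneg fun _ _ => h0 _) (by rw [sum_comm]; exact htotal)
  have hV := abs_miJoint_le (fun v a => ∑ u, q (a, u, v))
    (fun _ _ => sum_nonneg fun _ _ => h0 _)
    (by rw [sum_comm, ← htotal]; exact sum_congr rfl fun _ _ => sum_comm)
  simp only [Fintype.card_fin, Nat.cast_add, Nat.cast_one] at hU hV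
  linarith [abs_le.1 hU, abs_le.1 hV]

theorem exists_mem_WZset_le_mul_add_mul (hq0 : ∀ uv, 0 ≤ qUV uv) (hq1 : ∑ uv, qUV uv = 1)
    {D₁ D₂ ρ₁ ρ₂ θ : ℝ} (hθ₀ : 0 ≤ θ) (hθ₁ : θ ≤ 1) (h₁ : ρ₁ ∈ WZset qUV d D₁)
    (h₂ : ρ₂ ∈ WZset qUV d D₂) :
    ∃ ρ ∈ WZset qUV d (θ * D₁ + (1 - θ) * D₂), ρ ≤ θ * ρ₁ + (1 - θ) * ρ₂ := by
  obtain ⟨c₁, hrate₁, hdist₁⟩ := exists_WZCode_of_mem_WZset hq0 hq1 h₁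
  obtain ⟨c₂, hrate₂, hdist₂⟩ := exists_WZCode_of_mem_WZset hq0 hq1 h₂
  obtain ⟨c, hcard, hrate, hdist⟩ := (c₁.mix c₂ hθ₀ hθ₁).exists_card_support_le d
  obtain ⟨c', hrate', hdist'⟩ := c.exists_reindex (κ := Fin (Fintype.card 𝒰 + 1)) d
    (by simpa using hcard)
  refine ⟨c'.rate, c'.rate_mem_WZset hq0 hq1 ?_, ?_⟩
  · rw [hdist', hdist, WZCode.distortion_mix]
    have := mul_le_mul_of_nonneg_left hdist₁ hθ₀
    have := mul_le_mul_of_nonneg_left hdist₂ (sub_nonneg.2 hθ₁)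
    linarith
  · rw [hrate', ← hrate₁, ← hrate₂, ← WZCode.rate_mix c₁ c₂ hθ₀ hθ₁]
    exact hrate

end WZset

end

theorem stmt16_general {𝒰 𝒱 𝒰h : Type}
    [Fintype 𝒰] [Fintype 𝒱] [Fintype 𝒰h]
    (qUV : 𝒰 × 𝒱 → ℝ) (hq0 : ∀ uv, 0 ≤ qUV uv) (hq1 : ∑ uv, qUV uv = 1)
    (d : 𝒰 → 𝒰h → ℝ) :
    (∀ D₁ D₂ : ℝ, 0 ≤ D₁ → 0 ≤ D₂ → D₁ ≤ D₂ →
      (WZset qUV d D₁).Nonempty → (WZset qUV d D₂).Nonempty →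
      WZ qUV d D₂ ≤ WZ qUV d D₁) ∧
    (∀ D₁ D₂ θ : ℝ, 0 ≤ D₁ → 0 ≤ D₂ →
      (WZset qUV d D₁).Nonempty → (WZset qUV d D₂).Nonempty →
      0 ≤ θ → θ ≤ 1 →
      WZ qUV d (θ * D₁ + (1 - θ) * D₂) ≤ θ * WZ qUV d D₁ + (1 - θ) * WZ qUV d D₂) := by
  constructor
  · intro D₁ D₂ _ _ hD hne₁ _
    exact csInf_le_csInf (bddBelow_WZset D₂) hne₁ (WZset_mono hD)
  · intro D₁ D₂ θ _ _ hne₁ hne₂ hθ₀ hθ₁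
    exact sInf_le_mul_sInf_add_mul_sInf hne₁ (bddBelow_WZset D₁) hne₂ (bddBelow_WZset D₂)
      (bddBelow_WZset _) hθ₀ hθ₁ fun _ h₁ _ h₂ =>
        exists_mem_WZset_le_mul_add_mul hq0 hq1 hθ₀ hθ₁ h₁ h₂

/-- On the set of distortion levels `D ≥ 0` with nonempty constraint set, the
Wyner--Ziv rate--distortion function is (i) nonincreasing and (ii) convex. -/
theorem stmt16 {𝒰 𝒱 𝒰h : Type}
    [Fintype 𝒰] [Nonempty 𝒰] [Fintype 𝒱] [Nonempty 𝒱] [Fintype 𝒰h] [Nonempty 𝒰h]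
    (qUV : 𝒰 × 𝒱 → ℝ) (hq0 : ∀ uv, 0 ≤ qUV uv) (hq1 : ∑ uv, qUV uv = 1)
    (d : 𝒰 → 𝒰h → ℝ) (hd : ∀ u uh, 0 ≤ d u uh) :
    (∀ D₁ D₂ : ℝ, 0 ≤ D₁ → 0 ≤ D₂ → D₁ ≤ D₂ →
      (WZset qUV d D₁).Nonempty → (WZset qUV d D₂).Nonempty →
      WZ qUV d D₂ ≤ WZ qUV d D₁) ∧
    (∀ D₁ D₂ θ : ℝ, 0 ≤ D₁ → 0 ≤ D₂ →
      (WZset qUV d D₁).Nonempty → (WZset qUV d D₂).Nonempty →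
      0 ≤ θ → θ ≤ 1 →
      WZ qUV d (θ * D₁ + (1 - θ) * D₂) ≤ θ * WZ qUV d D₁ + (1 - θ) * WZ qUV d D₂) :=
  stmt16_general qUV hq0 hq1 d
end
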